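/- Let 0 < λ < 1 and set m_* = (2(1−λ)(2−λ)/(1−2^{λ−1}))^{1/(2−λ)}. If 0 < m ≤ m_*, then every single open interval of length m attains the infimum E_λ(m), and conversely every minimizer, i.e. every finite union Ω of bounded open intervals with pairwise disjoint closures, |Ω| = m and 𝓔_λ[Ω] = E_λ(m), coincides up to a set of Lebesgue measure zero with a single interval of length m. -/

import Mathlib

open MeasureTheory Set ENNReal

/-- The Riesz self-interaction energy `(1/2)∬_{Ω×Ω} |x-y|^{-λ} dx dy` of a set `Ω ⊆ ℝ`. -/
noncomputable def rieszEnergy1d (lam : ℝ) (Ω : Set ℝ) : ℝ :=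
  (1 / 2) * ∫ x in Ω, ∫ y in Ω, |x - y| ^ (-lam)

/-- `Ω` is the union of the `K` nonempty bounded open intervals `(a i, b i)`,
whose closures are pairwise disjoint. -/
def IsIntervalUnion (K : ℕ) (a b : Fin K → ℝ) (Ω : Set ℝ) : Prop :=
  (∀ i, a i < b i) ∧
  (Pairwise fun i j => Disjoint (Icc (a i) (b i)) (Icc (a j) (b j))) ∧
  Ω = ⋃ i, Ioo (a i) (b i)

/-- The set of energies `2K + (1/2)∬_{Ω×Ω} |x-y|^{-λ}` of admissible sets `Ω` of mass `m`. -/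
noncomputable def gldEnergies (lam m : ℝ) : Set ℝ :=
  { e | ∃ (K : ℕ) (a b : Fin K → ℝ) (Ω : Set ℝ), 1 ≤ K ∧ IsIntervalUnion K a b Ω ∧
      volume Ω = ENNReal.ofReal m ∧ e = 2 * K + rieszEnergy1d lam Ω }

/-!
An interval of length `ℓ` has Riesz energy `ℓ^(2-λ) / ((1-λ)(2-λ))`. The energy of a union of
disjoint intervals is at least the sum of the energies of its pieces, strictly so when there are
two or more pieces, because the cross interactions are positive. Convexity of `t ↦ t^p` gives
`2^(1-p) (a+b)^p ≤ a^p + b^p`, so merging two pieces raises the self-energy by at most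
`(1 - 2^(λ-1)) m^(2-λ) / ((1-λ)(2-λ))`, which for `m ≤ m_*` does not exceed the perimeter `2`
saved. Merging all `K` pieces one by one shows that a single interval has the least energy, and that
every configuration with `K ≥ 2` has strictly more.
-/

open Bornology Function

noncomputable def rieszPotential (lam : ℝ) (S : Set ℝ) (x : ℝ) : ℝ :=
  ∫ y in S, |x - y| ^ (-lam)

noncomputable def rieszInteraction (lam : ℝ) (S T : Set ℝ) : ℝ :=
  ∫ x in S, rieszPotential lam T x

section DiagonalSum

variable {ι M : Type*} [Fintype ι] [AddCommMonoid M] [PartialOrder M]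
  [IsOrderedCancelAddMonoid M] {e : ι → ι → M}

theorem sum_diag_le_sum_sum (he : ∀ i j, 0 ≤ e i j) : ∑ i, e i i ≤ ∑ i, ∑ j, e i j :=
  Finset.sum_le_sum fun i _ => Finset.single_le_sum (fun j _ => he i j) (Finset.mem_univ i)

theorem sum_diag_lt_sum_sum (he : ∀ i j, 0 ≤ e i j) {i j : ι} (hij : i ≠ j)
    (hpos : 0 < e i j) :
    ∑ i, e i i < ∑ i, ∑ j, e i j := by
  refine Finset.sum_lt_sum
    (fun k _ => Finset.single_le_sum (fun l _ => he k l) (Finset.mem_univ k)) ⟨i, by simp, ?_⟩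
  calc e i i < e i i + e i j := lt_add_of_pos_right _ hpos
    _ ≤ ∑ k, e i k :=
      Finset.add_le_sum (fun k _ => he i k) (Finset.mem_univ i) (Finset.mem_univ j) hij

end DiagonalSum

section Riesz

variable {lam : ℝ}

theorem rieszEnergy1d_eq_rieszInteraction (Ω : Set ℝ) :
    rieszEnergy1d lam Ω = rieszInteraction lam Ω Ω / 2 := by
  unfold rieszEnergy1d rieszInteraction rieszPotential
  ring

theorem locallyIntegrable_abs_sub_rpow_neg (hlam : lam < 1) (x : ℝ) :
    LocallyIntegrable (fun y : ℝ => |x - y| ^ (-lam)) := by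
  have h0 : LocallyIntegrable (fun t : ℝ => |t| ^ (-lam)) :=
    locallyIntegrable_of_norm_le_rpow (α := lam) (C := 1) (by simp) (by simpa using hlam)
      (Filter.Eventually.of_forall fun t => by
        simp [Real.norm_eq_abs, abs_of_nonneg (Real.rpow_nonneg (abs_nonneg t) _)])
      (continuous_abs.measurable.pow_const _).aestronglyMeasurable
  rw [← (volume.measurePreserving_sub_left x).map_eq] at h0
  exact (locallyIntegrable_map_homeomorph (Homeomorph.subLeft x)).1 h0

theorem integrableOn_abs_sub_rpow_neg (hlam : lam < 1) (x : ℝ) {S : Set ℝ} (hS : IsBounded S) :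
    IntegrableOn (fun y => |x - y| ^ (-lam)) S :=
  ((locallyIntegrable_abs_sub_rpow_neg hlam x).integrableOn_isCompact
    hS.isCompact_closure).mono_set subset_closure

theorem rieszPotential_Ioo (hlam : lam < 1) {a b x : ℝ} (hx : x ∈ Icc a b) :
    rieszPotential lam (Ioo a b) x =
      ((x - a) ^ (1 - lam) + (b - x) ^ (1 - lam)) / (1 - lam) := by
  have hint : ∀ u v, IntervalIntegrable (fun y => |x - y| ^ (-lam)) volume u v := fun u v =>
    (integrableOn_abs_sub_rpow_neg hlam x isCompact_uIcc.isBounded).intervalIntegrable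
  have left : ∫ y in a..x, |x - y| ^ (-lam) = (x - a) ^ (1 - lam) / (1 - lam) := by
    rw [intervalIntegral.integral_congr (g := fun y => (x - y) ^ (-lam)) fun y hy => by
      rw [uIcc_of_le hx.1] at hy
      simp only [abs_of_nonneg (sub_nonneg.2 hy.2)]]
    rw [intervalIntegral.integral_comp_sub_left (fun t => t ^ (-lam)) x, sub_self,
      integral_rpow (Or.inl (by linarith)), Real.zero_rpow (by linarith)]
    ring_nf
  have right : ∫ y in x..b, |x - y| ^ (-lam) = (b - x) ^ (1 - lam) / (1 - lam) := by
    rw [intervalIntegral.integral_congr (g := fun y => (y - x) ^ (-lam)) fun y hy => by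
      rw [uIcc_of_le hx.2] at hy
      simp only [abs_sub_comm x, abs_of_nonneg (sub_nonneg.2 hy.1)]]
    rw [intervalIntegral.integral_comp_sub_right (fun t => t ^ (-lam)) x, sub_self,
      integral_rpow (Or.inl (by linarith)), Real.zero_rpow (by linarith)]
    ring_nf
  rw [rieszPotential, ← integral_Ioc_eq_integral_Ioo,
    ← intervalIntegral.integral_of_le (hx.1.trans hx.2),
    ← intervalIntegral.integral_add_adjacent_intervals (hint a x) (hint x b), left, right,
    add_div]

theorem rieszInteraction_Ioo_self (hlam : lam < 1) {a b : ℝ} (hab : a ≤ b) :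
    rieszInteraction lam (Ioo a b) (Ioo a b) =
      2 * (b - a) ^ (2 - lam) / ((1 - lam) * (2 - lam)) := by
  have hr : (-1 : ℝ) < 1 - lam := by linarith
  have left : ∫ x in a..b, (x - a) ^ (1 - lam) = (b - a) ^ (2 - lam) / (2 - lam) := by
    rw [intervalIntegral.integral_comp_sub_right (fun t => t ^ (1 - lam)) a, sub_self,
      integral_rpow (Or.inl hr), Real.zero_rpow (by linarith)]
    ring_nf
  have right : ∫ x in a..b, (b - x) ^ (1 - lam) = (b - a) ^ (2 - lam) / (2 - lam) := by
    rw [intervalIntegral.integral_comp_sub_left (fun t => t ^ (1 - lam)) b, sub_self,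
      integral_rpow (Or.inl hr), Real.zero_rpow (by linarith)]
    ring_nf
  rw [rieszInteraction, setIntegral_congr_fun measurableSet_Ioo
    fun x hx => rieszPotential_Ioo hlam (Ioo_subset_Icc_self hx),
    ← integral_Ioc_eq_integral_Ioo, ← intervalIntegral.integral_of_le hab,
    intervalIntegral.integral_div, intervalIntegral.integral_add _ _, left, right]
  · field_simp
    ring
  · simpa using
      (intervalIntegral.intervalIntegrable_rpow' (a := 0) (b := b - a) hr).comp_sub_right a
  · simpa using
      (intervalIntegral.intervalIntegrable_rpow' (a := b - a) (b := 0) hr).comp_sub_left b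

theorem rieszEnergy1d_Ioo (hlam : lam < 1) {a b : ℝ} (hab : a ≤ b) :
    rieszEnergy1d lam (Ioo a b) = (b - a) ^ (2 - lam) / ((1 - lam) * (2 - lam)) := by
  rw [rieszEnergy1d_eq_rieszInteraction, rieszInteraction_Ioo_self hlam hab]
  ring

theorem rieszPotential_nonneg (S : Set ℝ) (x : ℝ) : 0 ≤ rieszPotential lam S x :=
  integral_nonneg fun _ => Real.rpow_nonneg (abs_nonneg _) _

theorem stronglyMeasurable_rieszPotential (S : Set ℝ) :
    StronglyMeasurable (rieszPotential lam S) :=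
  StronglyMeasurable.integral_prod_right' (f := fun p : ℝ × ℝ => |p.1 - p.2| ^ (-lam))
    ((measurable_fst.sub measurable_snd).abs.pow_const _).stronglyMeasurable

theorem rieszPotential_le_of_subset_closedBall (hlam : lam < 1) {S : Set ℝ} {x R : ℝ}
    (hR : 0 ≤ R) (hS : S ⊆ Metric.closedBall x R) :
    rieszPotential lam S x ≤ 2 * R ^ (1 - lam) / (1 - lam) := by
  have hball : Metric.closedBall x R =ᵐ[volume] Ioo (x - R) (x + R) := by
    rw [Real.closedBall_eq_Icc]
    exact Ioo_ae_eq_Icc.symm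
  calc rieszPotential lam S x ≤ rieszPotential lam (Ioo (x - R) (x + R)) x :=
        setIntegral_mono_set
          (integrableOn_abs_sub_rpow_neg hlam x (Metric.isBounded_Ioo _ _))
          (Filter.Eventually.of_forall fun _ => Real.rpow_nonneg (abs_nonneg _) _)
          (hS.eventuallyLE.trans hball.le)
    _ = 2 * R ^ (1 - lam) / (1 - lam) := by
        rw [rieszPotential_Ioo hlam ⟨by linarith, by linarith⟩]
        ring_nf

theorem integrableOn_rieszPotential (hlam : lam < 1) {S T : Set ℝ} (hS : IsBounded S)
    (hT : IsBounded T) (hTm : MeasurableSet T) :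
    IntegrableOn (rieszPotential lam S) T := by
  obtain ⟨r, hr, hST⟩ := (hS.union hT).subset_closedBall_lt 0 0
  have hball : ∀ x ∈ T, S ⊆ Metric.closedBall x (2 * r) := fun x hx y hy => by
    have hy0 : dist y 0 ≤ r := hST (Or.inl hy)
    have hx0 : dist x 0 ≤ r := hST (Or.inr hx)
    simp only [Metric.mem_closedBall]
    linarith [dist_triangle_right y x 0]
  refine Integrable.mono' (integrableOn_const (C := 2 * (2 * r) ^ (1 - lam) / (1 - lam))
    hT.measure_lt_top.ne)
    (stronglyMeasurable_rieszPotential S).aestronglyMeasurable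
    ((ae_restrict_iff' hTm).2 (Filter.Eventually.of_forall fun x hx => ?_))
  rw [Real.norm_of_nonneg (rieszPotential_nonneg S x)]
  exact rieszPotential_le_of_subset_closedBall hlam (by linarith) (hball x hx)

theorem rieszPotential_pos (hlam : lam < 1) {T : Set ℝ} (hT : IsBounded T)
    (hTpos : 0 < volume T) (x : ℝ) : 0 < rieszPotential lam T x := by
  refine (setIntegral_pos_iff_support_of_nonneg_ae
    (Filter.Eventually.of_forall fun _ => Real.rpow_nonneg (abs_nonneg _) _)
    (integrableOn_abs_sub_rpow_neg hlam x hT)).2 ?_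
  have hsupp : T \ {x} ⊆ support (fun y => |x - y| ^ (-lam)) ∩ T := fun y hy =>
    ⟨(Real.rpow_pos_of_pos (abs_pos.2 (sub_ne_zero.2 (Ne.symm hy.2))) _).ne', hy.1⟩
  calc 0 < volume T := hTpos
    _ = volume (T \ {x}) := (measure_sdiff_null (measure_singleton x)).symm
    _ ≤ _ := measure_mono hsupp

theorem rieszInteraction_nonneg (S T : Set ℝ) : 0 ≤ rieszInteraction lam S T :=
  integral_nonneg fun x => rieszPotential_nonneg T x

theorem rieszInteraction_pos (hlam : lam < 1) {S T : Set ℝ} (hS : IsBounded S)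
    (hSm : MeasurableSet S) (hSpos : 0 < volume S) (hT : IsBounded T) (hTpos : 0 < volume T) :
    0 < rieszInteraction lam S T := by
  refine (setIntegral_pos_iff_support_of_nonneg_ae
    (Filter.Eventually.of_forall fun x => rieszPotential_nonneg T x)
    (integrableOn_rieszPotential hlam hT hS hSm)).2 ?_
  rwa [(support_eq_univ fun x => (rieszPotential_pos hlam hT hTpos x).ne'),
    univ_inter]

section Decomposition

variable {ι : Type*} [Fintype ι] {S : ι → Set ℝ}

theorem rieszPotential_iUnion (hlam : lam < 1) (hSm : ∀ i, MeasurableSet (S i))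
    (hdisj : Pairwise (Disjoint on S)) (hSb : ∀ i, IsBounded (S i)) (x : ℝ) :
    rieszPotential lam (⋃ i, S i) x = ∑ i, rieszPotential lam (S i) x := by
  rw [rieszPotential, integral_iUnion hSm hdisj
    (integrableOn_abs_sub_rpow_neg hlam x (isBounded_iUnion.2 hSb)), tsum_fintype]
  rfl

theorem rieszInteraction_iUnion (hlam : lam < 1) (hSm : ∀ i, MeasurableSet (S i))
    (hdisj : Pairwise (Disjoint on S)) (hSb : ∀ i, IsBounded (S i)) :
    rieszInteraction lam (⋃ i, S i) (⋃ i, S i) =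
      ∑ i, ∑ j, rieszInteraction lam (S i) (S j) := by
  have hUb : IsBounded (⋃ i, S i) := isBounded_iUnion.2 hSb
  rw [rieszInteraction, integral_iUnion hSm hdisj
    (integrableOn_rieszPotential hlam hUb hUb (MeasurableSet.iUnion hSm)), tsum_fintype]
  refine Finset.sum_congr rfl fun i _ => ?_
  rw [setIntegral_congr_fun (hSm i) fun x _ => rieszPotential_iUnion hlam hSm hdisj hSb x]
  exact integral_finsetSum _ fun j _ =>
    integrableOn_rieszPotential hlam (hSb j) (hSb i) (hSm i)

theorem sum_rieszEnergy1d_le_rieszEnergy1d_iUnion (hlam : lam < 1)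
    (hSm : ∀ i, MeasurableSet (S i)) (hdisj : Pairwise (Disjoint on S))
    (hSb : ∀ i, IsBounded (S i)) :
    ∑ i, rieszEnergy1d lam (S i) ≤ rieszEnergy1d lam (⋃ i, S i) := by
  simp only [rieszEnergy1d_eq_rieszInteraction, ← Finset.sum_div,
    rieszInteraction_iUnion hlam hSm hdisj hSb]
  refine div_le_div_of_nonneg_right ?_ zero_le_two
  exact sum_diag_le_sum_sum fun i j => rieszInteraction_nonneg (S i) (S j)

theorem sum_rieszEnergy1d_lt_rieszEnergy1d_iUnion (hlam : lam < 1)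
    (hSm : ∀ i, MeasurableSet (S i)) (hdisj : Pairwise (Disjoint on S))
    (hSb : ∀ i, IsBounded (S i)) {i j : ι} (hij : i ≠ j) (hi : 0 < volume (S i))
    (hj : 0 < volume (S j)) :
    ∑ i, rieszEnergy1d lam (S i) < rieszEnergy1d lam (⋃ i, S i) := by
  simp only [rieszEnergy1d_eq_rieszInteraction, ← Finset.sum_div,
    rieszInteraction_iUnion hlam hSm hdisj hSb]
  refine div_lt_div_of_pos_right ?_ zero_lt_two
  exact sum_diag_lt_sum_sum (fun i j => rieszInteraction_nonneg (S i) (S j)) hij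
    (rieszInteraction_pos hlam (hSb i) (hSm i) hi (hSb j) hj)

end Decomposition

end Riesz

theorem two_rpow_one_sub_mul_rpow_add_le {p a b : ℝ} (hp : 1 ≤ p) (ha : 0 ≤ a)
    (hb : 0 ≤ b) :
    2 ^ (1 - p) * (a + b) ^ p ≤ a ^ p + b ^ p := by
  have hconv : ((a + b) / 2) ^ p ≤ (a ^ p + b ^ p) / 2 := by
    have := (convexOn_rpow hp).2 (mem_Ici.2 ha) (mem_Ici.2 hb)
      (by norm_num : (0 : ℝ) ≤ 1 / 2) (by norm_num : (0 : ℝ) ≤ 1 / 2) (by norm_num)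
    rwa [smul_eq_mul, smul_eq_mul, smul_eq_mul, smul_eq_mul, ← mul_add, ← mul_add,
      one_div_mul_eq_div, one_div_mul_eq_div] at this
  calc 2 ^ (1 - p) * (a + b) ^ p = 2 * ((a + b) / 2) ^ p := by
        rw [Real.div_rpow (by positivity) zero_le_two, Real.rpow_sub zero_lt_two, Real.rpow_one]
        ring
    _ ≤ 2 * ((a ^ p + b ^ p) / 2) := by gcongr
    _ = a ^ p + b ^ p := by ring

theorem rpow_sum_le_sum_rpow_add {ι : Type*} {p : ℝ} (hp : 1 ≤ p) {ℓ : ι → ℝ}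
    (hℓ : ∀ i, 0 ≤ ℓ i) {s : Finset ι} (hs : s.Nonempty) :
    (∑ i ∈ s, ℓ i) ^ p ≤
      ∑ i ∈ s, ℓ i ^ p + (s.card - 1) * (1 - 2 ^ (1 - p)) * (∑ i ∈ s, ℓ i) ^ p := by
  induction hs using Finset.Nonempty.cons_induction with
  | singleton i => simp
  | cons i s hi hs ih =>
    set t := ∑ j ∈ s, ℓ j
    have ht : 0 ≤ t := Finset.sum_nonneg fun j _ => hℓ j
    have hδ : 0 ≤ 1 - (2 : ℝ) ^ (1 - p) :=
      sub_nonneg.2 (Real.rpow_le_one_of_one_le_of_nonpos one_le_two (by linarith))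
    have hcard : (1 : ℝ) ≤ s.card := by exact_mod_cast hs.card_pos
    have hmono : t ^ p ≤ (ℓ i + t) ^ p :=
      Real.rpow_le_rpow ht (le_add_of_nonneg_left (hℓ i)) (by linarith)
    have hmerge := two_rpow_one_sub_mul_rpow_add_le hp (hℓ i) ht
    have hih := mul_le_mul_of_nonneg_left hmono (mul_nonneg (sub_nonneg.2 hcard) hδ)
    rw [Finset.sum_cons, Finset.sum_cons, Finset.card_cons]
    push_cast
    linarith

theorem two_add_rpow_div_le {ι : Type*} {p c m : ℝ} (hp : 1 ≤ p) (hc : 0 < c)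
    (hm : (1 - 2 ^ (1 - p)) * m ^ p ≤ 2 * c) {ℓ : ι → ℝ} (hℓ : ∀ i, 0 ≤ ℓ i)
    {s : Finset ι} (hs : s.Nonempty) (hsum : ∑ i ∈ s, ℓ i = m) :
    2 + m ^ p / c ≤ 2 * s.card + ∑ i ∈ s, ℓ i ^ p / c := by
  have hmerge := rpow_sum_le_sum_rpow_add hp hℓ hs
  rw [hsum] at hmerge
  have hcard : (1 : ℝ) ≤ s.card := by exact_mod_cast hs.card_pos
  have hcost := mul_le_mul_of_nonneg_left hm (sub_nonneg.2 hcard)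
  calc 2 + m ^ p / c ≤ 2 + (∑ i ∈ s, ℓ i ^ p + 2 * c * (s.card - 1)) / c := by
        gcongr
        linarith
    _ = 2 * s.card + ∑ i ∈ s, ℓ i ^ p / c := by
        rw [← Finset.sum_div]
        field_simp
        ring

namespace IsIntervalUnion

variable {K : ℕ} {a b : Fin K → ℝ} {Ω : Set ℝ}

theorem pairwise_disjoint_Ioo (h : IsIntervalUnion K a b Ω) :
    Pairwise (Disjoint on fun i => Ioo (a i) (b i)) := fun _ _ hij =>
  (h.2.1 hij).mono Ioo_subset_Icc_self Ioo_subset_Icc_self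

theorem volume_eq (h : IsIntervalUnion K a b Ω) :
    volume Ω = ENNReal.ofReal (∑ i, (b i - a i)) := by
  rw [h.2.2, measure_iUnion h.pairwise_disjoint_Ioo fun i => measurableSet_Ioo, tsum_fintype,
    ENNReal.ofReal_sum_of_nonneg fun i _ => sub_nonneg.2 (h.1 i).le]
  simp only [Real.volume_Ioo]

theorem sum_sub_eq {m : ℝ} (h : IsIntervalUnion K a b Ω) (hm : 0 ≤ m)
    (hvol : volume Ω = ENNReal.ofReal m) : ∑ i, (b i - a i) = m :=
  (ENNReal.ofReal_eq_ofReal_iff (Finset.sum_nonneg fun i _ => sub_nonneg.2 (h.1 i).le) hm).1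
    (h.volume_eq.symm.trans hvol)

theorem sum_rieszEnergy1d_le {lam : ℝ} (hlam : lam < 1) (h : IsIntervalUnion K a b Ω) :
    ∑ i, rieszEnergy1d lam (Ioo (a i) (b i)) ≤ rieszEnergy1d lam Ω := by
  rw [h.2.2]
  exact sum_rieszEnergy1d_le_rieszEnergy1d_iUnion hlam (fun i => measurableSet_Ioo)
    h.pairwise_disjoint_Ioo fun i => Metric.isBounded_Ioo _ _

theorem sum_rieszEnergy1d_lt {lam : ℝ} (hlam : lam < 1) (h : IsIntervalUnion K a b Ω)
    (hK : 2 ≤ K) : ∑ i, rieszEnergy1d lam (Ioo (a i) (b i)) < rieszEnergy1d lam Ω := by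
  have hpos : ∀ i, 0 < volume (Ioo (a i) (b i)) := fun i => by
    simpa [Real.volume_Ioo] using h.1 i
  rw [h.2.2]
  exact sum_rieszEnergy1d_lt_rieszEnergy1d_iUnion hlam (fun i => measurableSet_Ioo)
    h.pairwise_disjoint_Ioo (fun i => Metric.isBounded_Ioo _ _)
    (i := ⟨0, by omega⟩) (j := ⟨1, by omega⟩) (by simp) (hpos _) (hpos _)

theorem two_add_le_sum_rieszEnergy1d {lam m : ℝ} (hlam : lam < 1) (hm : 0 ≤ m)
    (hmass : (1 - 2 ^ (lam - 1)) * m ^ (2 - lam) ≤ 2 * (1 - lam) * (2 - lam))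
    (h : IsIntervalUnion K a b Ω) (hK : 1 ≤ K) (hvol : volume Ω = ENNReal.ofReal m) :
    2 + m ^ (2 - lam) / ((1 - lam) * (2 - lam)) ≤
      2 * K + ∑ i, rieszEnergy1d lam (Ioo (a i) (b i)) := by
  have hne : (Finset.univ : Finset (Fin K)).Nonempty := Finset.univ_nonempty_iff.2 ⟨⟨0, hK⟩⟩
  simp only [rieszEnergy1d_Ioo hlam (h.1 _).le]
  simpa using two_add_rpow_div_le (by linarith) (by nlinarith)
    (by rwa [show 1 - (2 - lam) = lam - 1 by ring, ← mul_assoc])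
    (fun i => sub_nonneg.2 (h.1 i).le) hne (h.sum_sub_eq hm hvol)

theorem eq_Ioo_of_one {a b : Fin 1 → ℝ}
    (h : IsIntervalUnion 1 a b Ω) : Ω = Ioo (a 0) (b 0) := by
  rw [h.2.2]
  exact iUnion_eq_const fun i => by rw [Subsingleton.elim i 0]

end IsIntervalUnion

theorem isIntervalUnion_Ioo {c m : ℝ} (hm : 0 < m) :
    IsIntervalUnion 1 (fun _ => c) (fun _ => c + m) (Ioo c (c + m)) :=
  ⟨fun _ => by linarith, fun i j hij => absurd (Subsingleton.elim i j) hij,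
    (iUnion_const (ι := Fin 1) _).symm⟩

theorem sInf_gldEnergies {lam m : ℝ} (hlam : lam < 1) (hm : 0 < m)
    (hmass : (1 - 2 ^ (lam - 1)) * m ^ (2 - lam) ≤ 2 * (1 - lam) * (2 - lam)) :
    sInf (gldEnergies lam m) = 2 + m ^ (2 - lam) / ((1 - lam) * (2 - lam)) := by
  have hmem : 2 + m ^ (2 - lam) / ((1 - lam) * (2 - lam)) ∈ gldEnergies lam m := by
    refine ⟨1, _, _, _, le_rfl, isIntervalUnion_Ioo (c := 0) hm, ?_, ?_⟩
    · rw [Real.volume_Ioo, zero_add, sub_zero]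
    · rw [rieszEnergy1d_Ioo hlam (by linarith), zero_add, sub_zero]
      ring
  have hlower : ∀ e ∈ gldEnergies lam m, 2 + m ^ (2 - lam) / ((1 - lam) * (2 - lam)) ≤ e := by
    rintro e ⟨K, a, b, Ω, hK, h, hvol, rfl⟩
    exact (h.two_add_le_sum_rieszEnergy1d hlam hm.le hmass hK hvol).trans
      (add_le_add le_rfl (h.sum_rieszEnergy1d_le hlam))
  exact le_antisymm (csInf_le ⟨_, hlower⟩ hmem) (le_csInf ⟨_, hmem⟩ hlower)

theorem one_sub_two_rpow_mul_rpow_le {lam m : ℝ} (hlam : lam < 1) (hm : 0 ≤ m)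
    (hmstar : m ≤ (2 * (1 - lam) * (2 - lam) / (1 - 2 ^ (lam - 1))) ^ (1 / (2 - lam))) :
    (1 - 2 ^ (lam - 1)) * m ^ (2 - lam) ≤ 2 * (1 - lam) * (2 - lam) := by
  have hd : 0 < 1 - (2 : ℝ) ^ (lam - 1) :=
    sub_pos.2 (Real.rpow_lt_one_of_one_lt_of_neg one_lt_two (by linarith))
  have hpow := Real.rpow_le_rpow hm hmstar (by linarith : (0 : ℝ) ≤ 2 - lam)
  rw [← Real.rpow_mul (div_pos (by nlinarith) hd).le, one_div_mul_cancel (by linarith),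
    Real.rpow_one, le_div_iff₀ hd] at hpow
  linarith

theorem gld1d_minimizers_are_intervals_general (lam : ℝ) (hlam1 : lam < 1)
    (m : ℝ) (hm : 0 < m)
    (hmstar : m ≤ (2 * (1 - lam) * (2 - lam) / (1 - 2 ^ (lam - 1))) ^ (1 / (2 - lam))) :
    (∀ c : ℝ, 2 * 1 + rieszEnergy1d lam (Ioo c (c + m)) = sInf (gldEnergies lam m)) ∧
    (∀ (K : ℕ) (a b : Fin K → ℝ) (Ω : Set ℝ), 1 ≤ K → IsIntervalUnion K a b Ω →
      volume Ω = ENNReal.ofReal m →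
      2 * K + rieszEnergy1d lam Ω = sInf (gldEnergies lam m) →
      ∃ c : ℝ, volume (symmDiff Ω (Ioo c (c + m))) = 0) := by
  have hmass := one_sub_two_rpow_mul_rpow_le hlam1 hm.le hmstar
  have hinf := sInf_gldEnergies hlam1 hm hmass
  refine ⟨fun c => ?_, fun K a b Ω hK h hvol hmin => ?_⟩
  · rw [hinf, rieszEnergy1d_Ioo hlam1 (by linarith), add_sub_cancel_left]
    ring
  rcases hK.eq_or_lt with rfl | hK
  · have hlen : b 0 - a 0 = m := by simpa using h.sum_sub_eq hm.le hvol
    refine ⟨a 0, ?_⟩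
    rw [h.eq_Ioo_of_one, show a 0 + m = b 0 by linarith, symmDiff_self, bot_eq_empty,
      measure_empty]
  · have hlt := (h.two_add_le_sum_rieszEnergy1d hlam1 hm.le hmass hK.le hvol).trans_lt
      (add_lt_add_of_le_of_lt le_rfl (h.sum_rieszEnergy1d_lt hlam1 hK))
    exact absurd (hmin.trans hinf) hlt.ne'

/-- For `0 < m ≤ m_* = (2(1-λ)(2-λ)/(1-2^{λ-1}))^{1/(2-λ)}`, every single open interval of
length `m` attains `E_λ(m)`, and every minimizer coincides, up to a set of measure zero,
with a single interval of length `m`. -/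
theorem gld1d_minimizers_are_intervals (lam : ℝ) (hlam0 : 0 < lam) (hlam1 : lam < 1)
    (m : ℝ) (hm : 0 < m)
    (hmstar : m ≤ (2 * (1 - lam) * (2 - lam) / (1 - 2 ^ (lam - 1))) ^ (1 / (2 - lam))) :
    (∀ c : ℝ, 2 * 1 + rieszEnergy1d lam (Ioo c (c + m)) = sInf (gldEnergies lam m)) ∧
    (∀ (K : ℕ) (a b : Fin K → ℝ) (Ω : Set ℝ), 1 ≤ K → IsIntervalUnion K a b Ω →
      volume Ω = ENNReal.ofReal m →
      2 * K + rieszEnergy1d lam Ω = sInf (gldEnergies lam m) →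
      ∃ c : ℝ, volume (symmDiff Ω (Ioo c (c + m))) = 0) :=
  gld1d_minimizers_are_intervals_general lam hlam1 m hm hmstar
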